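/- For any graph G and any ε > 0, the minimum of x^T(I + (1+ε)A_G)x over Δ_n equals 1/α(G), and the global minimizers are exactly the vectors χ^S/α(G) where S is a stable set of size α(G). -/
import Mathlib

open Matrix Finset
open scoped Classical

def IsStable {n : ℕ} (G : SimpleGraph (Fin n)) (S : Finset (Fin n)) : Prop :=
  ∀ i ∈ S, ∀ j ∈ S, ¬ G.Adj i j

noncomputable def alpha {n : ℕ} (G : SimpleGraph (Fin n)) : ℕ :=
  sSup {k | ∃ S : Finset (Fin n), IsStable G S ∧ S.card = k}

noncomputable def indic {n : ℕ} (S : Finset (Fin n)) : Fin n → ℝ :=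
  fun i => if i ∈ S then 1 else 0

noncomputable def qform {n : ℕ} (M : Matrix (Fin n) (Fin n) ℝ) (x : Fin n → ℝ) : ℝ :=
  x ⬝ᵥ M.mulVec x

noncomputable def fG {n : ℕ} (G : SimpleGraph (Fin n)) (x : Fin n → ℝ) : ℝ :=
  qform (1 + G.adjMatrix ℝ) x

noncomputable def globMin {n : ℕ} (f : (Fin n → ℝ) → ℝ) : Set (Fin n → ℝ) :=
  {x | x ∈ stdSimplex ℝ (Fin n) ∧ ∀ y ∈ stdSimplex ℝ (Fin n), f x ≤ f y}

section Aux
variable {n : ℕ} (G : SimpleGraph (Fin n)) (ε : ℝ)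

/-- the perturbed matrix -/
noncomputable abbrev MM : Matrix (Fin n) (Fin n) ℝ := 1 + (1 + ε) • G.adjMatrix ℝ

lemma MM_sym : (MM G ε)ᵀ = MM G ε := by
  simp [MM, transpose_add, transpose_smul]

lemma dot_sym (M : Matrix (Fin n) (Fin n) ℝ) (hM : Mᵀ = M) (x y : Fin n → ℝ) :
    y ⬝ᵥ M.mulVec x = x ⬝ᵥ M.mulVec y := by
  rw [dotProduct_mulVec, ← hM, vecMul_transpose, dotProduct_comm, hM]

lemma qform_expand (M : Matrix (Fin n) (Fin n) ℝ) (hM : Mᵀ = M) (x y : Fin n → ℝ) (t : ℝ) :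
    qform M (x + t • y)
      = qform M x + 2 * t * (x ⬝ᵥ M.mulVec y) + t ^ 2 * qform M y := by
  have h := dot_sym M hM x y
  simp only [qform, mulVec_add, mulVec_smul, dotProduct_add, add_dotProduct,
    dotProduct_smul, smul_dotProduct, smul_eq_mul]
  rw [h]; ring

lemma qform_eq (x : Fin n → ℝ) :
    qform (MM G ε) x
      = (∑ i, x i ^ 2) + (1 + ε) * ∑ i, ∑ j, (if G.Adj i j then x i * x j else 0) := by
  simp only [MM, qform, dotProduct, mulVec, Matrix.add_apply, Matrix.one_apply,
    Matrix.smul_apply, SimpleGraph.adjMatrix_apply, smul_eq_mul]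
  rw [Finset.mul_sum, ← Finset.sum_add_distrib]
  refine Finset.sum_congr rfl fun i _ => ?_
  rw [Finset.mul_sum, Finset.mul_sum, show x i ^ 2 = ∑ j, (if i = j then x i * x j else 0) by
    rw [Finset.sum_ite_eq Finset.univ i fun j => x i * x j]; simp [sq],
    ← Finset.sum_add_distrib]
  refine Finset.sum_congr rfl fun j _ => ?_
  split_ifs <;> ring

/-- if the support is stable, the quadratic form is the sum of squares -/
lemma qform_stable_support (x : Fin n → ℝ)
    (h : ∀ i j, x i ≠ 0 → x j ≠ 0 → ¬ G.Adj i j) :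
    qform (MM G ε) x = ∑ i, x i ^ 2 := by
  rw [qform_eq]
  have : ∀ i ∈ Finset.univ, ∑ j, (if G.Adj i j then x i * x j else 0) = 0 := by
    intro i _
    refine Finset.sum_eq_zero fun j _ => ?_
    by_cases hij : G.Adj i j
    · by_cases hi : x i = 0
      · simp [hij, hi]
      · by_cases hj : x j = 0
        · simp [hij, hj]
        · exact absurd hij (h i j hi hj)
    · simp [hij]
  rw [Finset.sum_congr rfl this]
  simp

lemma bddA : BddAbove {k | ∃ S : Finset (Fin n), IsStable G S ∧ S.card = k} := by
  refine ⟨n, fun k hk => ?_⟩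
  obtain ⟨S, _, rfl⟩ := hk
  simpa using S.card_le_univ

lemma card_le_alpha (S : Finset (Fin n)) (hS : IsStable G S) : S.card ≤ alpha G :=
  le_csSup (bddA G) ⟨S, hS, rfl⟩

lemma exists_max_stable : ∃ S : Finset (Fin n), IsStable G S ∧ S.card = alpha G := by
  have h0 : (0 : ℕ) ∈ {k | ∃ S : Finset (Fin n), IsStable G S ∧ S.card = k} := by
    simp only [Set.mem_setOf_eq]
    exact ⟨∅, by simp [IsStable], by simp⟩
  exact Nat.sSup_mem ⟨0, h0⟩ (bddA G)

lemma alpha_pos (hn : 0 < n) : 0 < alpha G := by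
  have : (1 : ℕ) ∈ {k | ∃ S : Finset (Fin n), IsStable G S ∧ S.card = k} := by
    simp only [Set.mem_setOf_eq]
    refine ⟨{⟨0, hn⟩}, ?_, by simp⟩
    intro i hi j hj
    simp only [Finset.mem_singleton] at hi hj
    subst hi; subst hj; exact G.irrefl
  exact lt_of_lt_of_le one_pos (le_csSup (bddA G) this)

lemma sum_sq_decomp (S : Finset (Fin n)) (hS : S.Nonempty) (x : Fin n → ℝ)
    (hsum : ∑ i ∈ S, x i = 1) :
    ∑ i ∈ S, x i ^ 2 = (∑ i ∈ S, (x i - 1 / S.card) ^ 2) + 1 / S.card := by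
  have hc : (S.card : ℝ) ≠ 0 := by
    have := Finset.card_pos.mpr hS
    positivity
  have : ∑ i ∈ S, (x i - 1 / S.card) ^ 2
      = ∑ i ∈ S, (x i ^ 2 - 2 / S.card * x i + (1 / S.card) ^ 2) := by
    exact Finset.sum_congr rfl fun i _ => by ring
  rw [this, Finset.sum_add_distrib, Finset.sum_sub_distrib, ← Finset.mul_sum, hsum,
    Finset.sum_const, nsmul_eq_mul]
  field_simp
  ring


lemma qform_single_sub (i j : Fin n) (hij : G.Adj i j) :
    qform (MM G ε) (Pi.single i 1 - Pi.single j 1) = -(2 * ε) := by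
  have hne : i ≠ j := G.ne_of_adj hij
  have entry : ∀ a b, MM G ε a b
      = (if a = b then 1 else 0) + (1 + ε) * (if G.Adj a b then 1 else 0) := by
    intro a b
    simp [MM, Matrix.add_apply, Matrix.one_apply, Matrix.smul_apply]
  have h2 : ∀ k, (MM G ε).mulVec (Pi.single i 1 - Pi.single j 1) k
      = MM G ε k i - MM G ε k j := by
    intro k
    simp [mulVec, dotProduct, Pi.sub_apply, Pi.single_apply, mul_sub,
      Finset.sum_sub_distrib, mul_ite, mul_one, mul_zero]
  have h1 : qform (MM G ε) (Pi.single i 1 - Pi.single j 1)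
      = (MM G ε i i - MM G ε i j) - (MM G ε j i - MM G ε j j) := by
    simp [qform, sub_dotProduct, h2]
  rw [h1, entry, entry, entry, entry]
  simp [hne, hne.symm, hij, hij.symm, G.irrefl]
  ring

lemma shift_mem (x : Fin n → ℝ) (hx : x ∈ stdSimplex ℝ (Fin n)) (i j : Fin n)
    (hne : i ≠ j) (t : ℝ) (ht1 : -(x i) ≤ t) (ht2 : t ≤ x j) :
    x + t • (Pi.single i 1 - Pi.single j 1) ∈ stdSimplex ℝ (Fin n) := by
  set d : Fin n → ℝ := Pi.single i 1 - Pi.single j 1 with hd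
  constructor
  · intro k
    by_cases hki : k = i
    · have : (x + t • d) k = x i + t := by rw [hki]; simp [hd, Pi.single_apply, hne]
      rw [this]; linarith
    · by_cases hkj : k = j
      · have : (x + t • d) k = x j - t := by
          rw [hkj]; simp [hd, Pi.single_apply, hne.symm]; ring
        rw [this]; linarith
      · have : (x + t • d) k = x k := by simp [hd, Pi.single_apply, hki, hkj]
        rw [this]; exact hx.1 k
  · have hsd : ∑ k, d k = 0 := by simp [hd, Finset.sum_sub_distrib]
    calc ∑ k, (x + t • d) k = (∑ k, x k) + t * ∑ k, d k := by
          simp [Finset.sum_add_distrib, Finset.mul_sum]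
      _ = 1 := by rw [hsd, hx.2]; ring

/-- The shift lemma: given an adjacent pair in the support with nonpositive directional
derivative, we can reduce the support without increasing the quadratic form. -/
lemma shift (x : Fin n → ℝ) (hx : x ∈ stdSimplex ℝ (Fin n)) (i j : Fin n)
    (hij : G.Adj i j) (hi : x i ≠ 0) (hj : x j ≠ 0)
    (hβ : (Pi.single i 1 - Pi.single j 1) ⬝ᵥ (MM G ε).mulVec x ≤ 0) (hε : 0 < ε) :
    ∃ y ∈ stdSimplex ℝ (Fin n),
      (Finset.univ.filter (fun k => y k ≠ 0)) ⊆
        (Finset.univ.filter (fun k => x k ≠ 0)) \ {j} ∧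
      qform (MM G ε) y ≤ qform (MM G ε) x := by
  have hne : i ≠ j := G.ne_of_adj hij
  set d : Fin n → ℝ := Pi.single i 1 - Pi.single j 1 with hd
  set y : Fin n → ℝ := x + x j • d with hy
  have hyi : y i = x i + x j := by simp [hy, hd, Pi.single_apply, hne]
  have hyj : y j = 0 := by simp [hy, hd, Pi.single_apply, hne.symm]
  have hyk : ∀ k, k ≠ i → k ≠ j → y k = x k := by
    intro k hki hkj; simp [hy, hd, Pi.single_apply, hki, hkj]
  have hxj : 0 ≤ x j := hx.1 j
  have hqd : qform (MM G ε) d = -(2 * ε) := qform_single_sub G ε i j hij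
  refine ⟨y, ⟨?_, ?_⟩, ?_, ?_⟩
  · intro k
    by_cases hki : k = i
    · rw [hki, hyi]; exact add_nonneg (hx.1 i) hxj
    · by_cases hkj : k = j
      · rw [hkj, hyj]
      · rw [hyk k hki hkj]; exact hx.1 k
  · have hsd : ∑ k, d k = 0 := by
      simp [hd, Finset.sum_sub_distrib]
    calc ∑ k, y k = (∑ k, x k) + x j * ∑ k, d k := by
          simp [hy, Finset.sum_add_distrib, Finset.mul_sum]
      _ = 1 := by rw [hsd, hx.2]; ring
  · intro k hk
    simp only [Finset.mem_filter, Finset.mem_univ, true_and] at hk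
    simp only [Finset.mem_sdiff, Finset.mem_filter, Finset.mem_univ, true_and,
      Finset.mem_singleton]
    constructor
    · by_cases hki : k = i
      · rw [hki]; exact hi
      · by_cases hkj : k = j
        · rw [hkj] at hk; exact absurd hyj hk
        · rw [← hyk k hki hkj]; exact hk
    · intro hkj; rw [hkj] at hk; exact hk hyj
  · rw [hy, qform_expand (MM G ε) (MM_sym G ε) x d (x j), hqd]
    have hβ' : x ⬝ᵥ (MM G ε).mulVec d ≤ 0 := by
      rw [dot_sym (MM G ε) (MM_sym G ε) d x]; exact hβ
    nlinarith [sq_nonneg (x j)]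


lemma lower_bound (hn : 0 < n) (hε : 0 < ε) :
    ∀ (k : ℕ) (x : Fin n → ℝ), x ∈ stdSimplex ℝ (Fin n) →
      (Finset.univ.filter (fun i => x i ≠ 0)).card ≤ k →
      1 / (alpha G : ℝ) ≤ qform (MM G ε) x := by
  intro k
  induction k with
  | zero =>
    intro x hx hcard
    exfalso
    have hemp : Finset.univ.filter (fun i => x i ≠ 0) = ∅ :=
      Finset.card_eq_zero.mp (Nat.le_zero.mp hcard)
    have hzero : ∀ i, x i = 0 := by
      intro i
      by_contra h
      have : i ∈ Finset.univ.filter (fun i => x i ≠ 0) := by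
        simp [h]
      rw [hemp] at this
      exact absurd this (Finset.notMem_empty i)
    have : (1 : ℝ) = 0 := by
      rw [← hx.2]
      exact Finset.sum_eq_zero fun i _ => hzero i
    norm_num at this
  | succ k ih =>
    intro x hx hcard
    by_cases hstab : ∀ i j, x i ≠ 0 → x j ≠ 0 → ¬ G.Adj i j
    · -- stable support
      set S := Finset.univ.filter (fun i => x i ≠ 0) with hSdef
      have hSstable : IsStable G S := by
        intro i hi j hj
        simp only [hSdef, Finset.mem_filter] at hi hj
        exact hstab i j hi.2 hj.2
      have hSsum : ∑ i ∈ S, x i = 1 := by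
        rw [hSdef, Finset.sum_filter_ne_zero]
        exact hx.2
      have hSne : S.Nonempty := by
        rcases Finset.eq_empty_or_nonempty S with h | h
        · exfalso; rw [h, Finset.sum_empty] at hSsum; norm_num at hSsum
        · exact h
      have hspos : (0 : ℝ) < S.card := by exact_mod_cast Finset.card_pos.mpr hSne
      have hαpos : (0 : ℝ) < (alpha G : ℝ) := by exact_mod_cast alpha_pos G hn
      have hcardle : (S.card : ℝ) ≤ (alpha G : ℝ) := by
        exact_mod_cast card_le_alpha G S hSstable
      have hq : qform (MM G ε) x = ∑ i ∈ S, x i ^ 2 := by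
        rw [qform_stable_support G ε x hstab]
        refine (Finset.sum_subset (Finset.subset_univ S) fun i _ hi => ?_).symm
        simp only [hSdef, Finset.mem_filter, Finset.mem_univ, true_and, not_not] at hi
        rw [hi]; ring
      rw [hq, sum_sq_decomp S hSne x hSsum]
      have h1 : 1 / (alpha G : ℝ) ≤ 1 / (S.card : ℝ) :=
        one_div_le_one_div_of_le hspos hcardle
      have h2 : (0 : ℝ) ≤ ∑ i ∈ S, (x i - 1 / S.card) ^ 2 :=
        Finset.sum_nonneg fun i _ => sq_nonneg _
      linarith
    · push_neg at hstab
      obtain ⟨i, j, hi, hj, hij⟩ := hstab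
      have hjmem : j ∈ Finset.univ.filter (fun i => x i ≠ 0) := by simp [hj]
      have himem : i ∈ Finset.univ.filter (fun i => x i ≠ 0) := by simp [hi]
      rcases le_or_gt ((Pi.single i 1 - Pi.single j 1) ⬝ᵥ (MM G ε).mulVec x) 0 with hβ | hβ
      · obtain ⟨y, hy, hsub, hle⟩ := shift G ε x hx i j hij hi hj hβ hε
        refine le_trans (ih y hy ?_) hle
        calc (Finset.univ.filter (fun k => y k ≠ 0)).card
            ≤ ((Finset.univ.filter (fun k => x k ≠ 0)) \ {j}).card :=
              Finset.card_le_card hsub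
          _ ≤ (Finset.univ.filter (fun k => x k ≠ 0)).card - 1 := by
              rw [Finset.card_sdiff_of_subset (by simpa using hjmem)]
              simp
          _ ≤ k := by omega
      · have hβ' : (Pi.single j 1 - Pi.single i 1) ⬝ᵥ (MM G ε).mulVec x ≤ 0 := by
          have hneg : (Pi.single j 1 - Pi.single i 1 : Fin n → ℝ)
              = -(Pi.single i 1 - Pi.single j 1 : Fin n → ℝ) := by
            funext k; simp [Pi.sub_apply, Pi.neg_apply]
          rw [hneg, neg_dotProduct]
          linarith
        obtain ⟨y, hy, hsub, hle⟩ := shift G ε x hx j i hij.symm hj hi hβ' hε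
        refine le_trans (ih y hy ?_) hle
        calc (Finset.univ.filter (fun k => y k ≠ 0)).card
            ≤ ((Finset.univ.filter (fun k => x k ≠ 0)) \ {i}).card :=
              Finset.card_le_card hsub
          _ ≤ (Finset.univ.filter (fun k => x k ≠ 0)).card - 1 := by
              rw [Finset.card_sdiff_of_subset (by simpa using himem)]
              simp
          _ ≤ k := by omega

end Aux

theorem stmt_12 (n : ℕ) (hn : 0 < n) (G : SimpleGraph (Fin n)) (ε : ℝ) (hε : 0 < ε) :
    IsLeast (qform (1 + (1 + ε) • G.adjMatrix ℝ) '' stdSimplex ℝ (Fin n))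
        (1 / (alpha G : ℝ)) ∧
      globMin (qform (1 + (1 + ε) • G.adjMatrix ℝ)) =
        {x | ∃ S : Finset (Fin n), IsStable G S ∧ S.card = alpha G ∧
          x = (alpha G : ℝ)⁻¹ • indic S} := by
  have hαpos : 0 < alpha G := alpha_pos G hn
  have hα : (0 : ℝ) < (alpha G : ℝ) := by exact_mod_cast hαpos
  -- candidate minimizers
  have hxS : ∀ S : Finset (Fin n), IsStable G S → S.card = alpha G →
      ((alpha G : ℝ)⁻¹ • indic S) ∈ stdSimplex ℝ (Fin n) ∧
      qform (MM G ε) ((alpha G : ℝ)⁻¹ • indic S) = 1 / (alpha G : ℝ) := by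
    intro S hS hc
    have hind : ∀ i, ((alpha G : ℝ)⁻¹ • indic S) i
        = (alpha G : ℝ)⁻¹ * (if i ∈ S then 1 else 0) := by
      intro i; simp [indic]
    have hsumind : ∑ i, (if i ∈ S then (1:ℝ) else 0) = (alpha G : ℝ) := by
      rw [Finset.sum_boole]
      have : Finset.univ.filter (fun i => i ∈ S) = S := by
        ext i; simp
      rw [this, hc]
    refine ⟨⟨?_, ?_⟩, ?_⟩
    · intro i
      rw [hind]
      by_cases h : i ∈ S <;> simp [h] <;> positivity
    · calc ∑ i, ((alpha G : ℝ)⁻¹ • indic S) i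
          = (alpha G : ℝ)⁻¹ * ∑ i, (if i ∈ S then (1:ℝ) else 0) := by
            rw [Finset.mul_sum]; exact Finset.sum_congr rfl fun i _ => hind i
        _ = 1 := by rw [hsumind]; field_simp
    · have hsupp : ∀ i j : Fin n, ((alpha G : ℝ)⁻¹ • indic S) i ≠ 0 →
          ((alpha G : ℝ)⁻¹ • indic S) j ≠ 0 → ¬ G.Adj i j := by
        intro i j hi hj
        rw [hind] at hi hj
        have hiS : i ∈ S := by by_contra h; simp [h] at hi
        have hjS : j ∈ S := by by_contra h; simp [h] at hj
        exact hS i hiS j hjS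
      rw [qform_stable_support G ε _ hsupp]
      have : ∀ i, ((alpha G : ℝ)⁻¹ • indic S) i ^ 2
          = (alpha G : ℝ)⁻¹ ^ 2 * (if i ∈ S then 1 else 0) := by
        intro i; rw [hind]; by_cases h : i ∈ S <;> simp [h] <;> ring
      calc ∑ i, ((alpha G : ℝ)⁻¹ • indic S) i ^ 2
          = (alpha G : ℝ)⁻¹ ^ 2 * ∑ i, (if i ∈ S then (1:ℝ) else 0) := by
            rw [Finset.mul_sum]; exact Finset.sum_congr rfl fun i _ => this i
        _ = 1 / (alpha G : ℝ) := by rw [hsumind]; field_simp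
  obtain ⟨S₀, hS₀, hc₀⟩ := exists_max_stable G
  have lb : ∀ y ∈ stdSimplex ℝ (Fin n), 1 / (alpha G : ℝ) ≤ qform (MM G ε) y :=
    fun y hy => lower_bound G ε hn hε _ y hy le_rfl
  constructor
  · constructor
    · exact ⟨(alpha G : ℝ)⁻¹ • indic S₀, (hxS S₀ hS₀ hc₀).1, (hxS S₀ hS₀ hc₀).2⟩
    · rintro r ⟨y, hy, rfl⟩
      exact lb y hy
  · ext x
    simp only [globMin, Set.mem_setOf_eq]
    constructor
    · rintro ⟨hx, hmin⟩
      have hqx : qform (MM G ε) x = 1 / (alpha G : ℝ) := by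
        refine le_antisymm ?_ (lb x hx)
        have := hmin _ (hxS S₀ hS₀ hc₀).1
        rw [(hxS S₀ hS₀ hc₀).2] at this
        exact this
      have hstab : ∀ i j, x i ≠ 0 → x j ≠ 0 → ¬ G.Adj i j := by
        intro i j hi hj hij
        have hne : i ≠ j := G.ne_of_adj hij
        have hxi : 0 < x i := lt_of_le_of_ne (hx.1 i) (Ne.symm hi)
        have hxj : 0 < x j := lt_of_le_of_ne (hx.1 j) (Ne.symm hj)
        set d : Fin n → ℝ := Pi.single i 1 - Pi.single j 1 with hd
        have hqd : qform (MM G ε) d = -(2 * ε) := qform_single_sub G ε i j hij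
        have h1 : qform (MM G ε) x ≤ qform (MM G ε) (x + x j • d) :=
          hmin _ (shift_mem x hx i j hne (x j) (by linarith) le_rfl)
        have h2 : qform (MM G ε) x ≤ qform (MM G ε) (x + (-(x i)) • d) :=
          hmin _ (shift_mem x hx i j hne (-(x i)) le_rfl (by linarith))
        rw [qform_expand (MM G ε) (MM_sym G ε) x d (x j), hqd] at h1
        rw [qform_expand (MM G ε) (MM_sym G ε) x d (-(x i)), hqd] at h2
        have hb1 : ε * x j ≤ x ⬝ᵥ (MM G ε).mulVec d := by nlinarith [h1, hxj]
        have hb2 : x ⬝ᵥ (MM G ε).mulVec d ≤ -(ε * x i) := by nlinarith [h2, hxi]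
        nlinarith [hb1, hb2, mul_pos hε hxi, mul_pos hε hxj]
      set S := Finset.univ.filter (fun i => x i ≠ 0) with hSdef
      have hSstable : IsStable G S := by
        intro i hi j hj
        simp only [hSdef, Finset.mem_filter] at hi hj
        exact hstab i j hi.2 hj.2
      have hSsum : ∑ i ∈ S, x i = 1 := by
        rw [hSdef, Finset.sum_filter_ne_zero]
        exact hx.2
      have hSne : S.Nonempty := by
        rcases Finset.eq_empty_or_nonempty S with h | h
        · exfalso; rw [h, Finset.sum_empty] at hSsum; norm_num at hSsum
        · exact h
      have hspos : (0 : ℝ) < S.card := by exact_mod_cast Finset.card_pos.mpr hSne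
      have hcardle : (S.card : ℝ) ≤ (alpha G : ℝ) := by
        exact_mod_cast card_le_alpha G S hSstable
      have hq : qform (MM G ε) x = ∑ i ∈ S, x i ^ 2 := by
        rw [qform_stable_support G ε x hstab]
        refine (Finset.sum_subset (Finset.subset_univ S) fun i _ hi => ?_).symm
        simp only [hSdef, Finset.mem_filter, Finset.mem_univ, true_and, not_not] at hi
        rw [hi]; ring
      have hdecomp := sum_sq_decomp S hSne x hSsum
      have h1 : 1 / (alpha G : ℝ) ≤ 1 / (S.card : ℝ) :=
        one_div_le_one_div_of_le hspos hcardle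
      have h2 : (0 : ℝ) ≤ ∑ i ∈ S, (x i - 1 / S.card) ^ 2 :=
        Finset.sum_nonneg fun i _ => sq_nonneg _
      have hsq0 : ∑ i ∈ S, (x i - 1 / S.card) ^ 2 = 0 := by
        rw [hq, hdecomp] at hqx
        linarith
      have hcards : (S.card : ℝ) = (alpha G : ℝ) := by
        rw [hq, hdecomp, hsq0] at hqx
        have h3 : (1:ℝ) / (S.card : ℝ) = 1 / (alpha G : ℝ) := by linarith
        have h4 := (div_eq_div_iff (ne_of_gt hspos) (ne_of_gt hα)).mp h3
        linarith
      have hcardS : S.card = alpha G := by exact_mod_cast hcards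
      refine ⟨S, hSstable, hcardS, ?_⟩
      funext i
      by_cases hiS : i ∈ S
      · have := (Finset.sum_eq_zero_iff_of_nonneg fun i _ => sq_nonneg _).mp hsq0 i hiS
        have hxi : x i = 1 / (S.card : ℝ) := by
          have := sq_eq_zero_iff.mp this
          linarith
        rw [hxi, hcards]
        simp [indic, hiS, one_div]
      · have hxi : x i = 0 := by
          by_contra h
          exact hiS (by simp [hSdef, h])
        rw [hxi]
        simp [indic, hiS]
    · rintro ⟨S, hS, hc, rfl⟩
      refine ⟨(hxS S hS hc).1, fun y hy => ?_⟩
      calc qform (MM G ε) ((alpha G : ℝ)⁻¹ • indic S) = 1 / (alpha G : ℝ) :=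
            (hxS S hS hc).2
        _ ≤ qform (MM G ε) y := lb y hy
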